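/- arXiv:1504.00596 — 2 statements merged into one kernel-verified Lean document; each statement's English description precedes it below -/
import Mathlib

section
/- Let P be a path on n vertices. Then M_c(P) = n − ⌈n/c⌉. -/
open Classical SimpleGraph

/-- The spanning subgraph of `G` whose edges join vertices of equal colour under `ω`.
Its connected components are the monochromatic components of `(G, ω)`. -/
def monoSubgraph {V C : Type*} (G : SimpleGraph V) (ω : V → C) : SimpleGraph V where
  Adj u v := G.Adj u v ∧ ω u = ω v
  symm := ⟨fun u v h => ⟨h.1.symm, h.2.symm⟩⟩
  loopless := ⟨fun u h => G.loopless.irrefl u h.1⟩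

/-- A single flooding move `(v, d)`: every vertex in the monochromatic component of `v`
receives colour `d`. -/
noncomputable def floodMove {V C : Type*} (G : SimpleGraph V) (ω : V → C) (v : V) (d : C) :
    V → C :=
  fun u => if (monoSubgraph G ω).Reachable v u then d else ω u

/-- Apply a sequence of flooding moves, in order. -/
noncomputable def floodSeq {V C : Type*} (G : SimpleGraph V) :
    List (V × C) → (V → C) → (V → C)
  | [], ω => ω
  | m :: ms, ω => floodSeq G ms (floodMove G ω m.1 m.2)

/-- `m(G, ω, d)`: the minimum number of moves needed to give every vertex colour `d`,
starting from the colouring `ω`. -/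
noncomputable def floodCost {V C : Type*} (G : SimpleGraph V) (ω : V → C) (d : C) : ℕ :=
  sInf {k | ∃ ms : List (V × C), ms.length = k ∧ ∀ v, floodSeq G ms ω v = d}

/-- `m(G, ω)`: the minimum over target colours `d ∈ C` of `m(G, ω, d)`. -/
noncomputable def floodCostMin {V C : Type*} (G : SimpleGraph V) (ω : V → C) : ℕ :=
  sInf {k | ∃ d : C, floodCost G ω d = k}

/-- `M_c(G)`: the maximum of `m(G, ω)` over all surjective colourings
`ω : V(G) → {1, …, c}`. -/
noncomputable def maxFloodCost {V : Type*} (c : ℕ) (G : SimpleGraph V) : ℕ :=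
  sSup {k | ∃ ω : V → Fin c, Function.Surjective ω ∧ floodCostMin G ω = k}

/-!
Upper bound: some colour `d` occurs at least `⌈n / c⌉` times, and recolouring the remaining
vertices with `d` one at a time takes at most `n - ⌈n / c⌉` moves.

Lower bound: colour vertex `i` by `i mod c`. The monochromatic components of any colouring of the
path are intervals, and in an interval any two residue classes mod `c` differ in size by at most
one. Hence a move increases the Hamming distance to this cyclic colouring by at most one, while
every constant colouring is at distance at least `n - ⌈n / c⌉` from it.
-/

open Finset

section Flooding

variable {V C : Type*} {G : SimpleGraph V}

theorem monoSubgraph_le (ω : V → C) : monoSubgraph G ω ≤ G := fun _ _ h => h.1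

theorem colour_eq_of_monoSubgraph_reachable {ω : V → C} {v u : V}
    (h : (monoSubgraph G ω).Reachable v u) : ω u = ω v := by
  obtain ⟨p⟩ := h
  induction p with
  | nil => rfl
  | cons hadj _ ih => exact ih.trans hadj.2.symm

theorem floodCost_le_length {ω : V → C} {d : C} {ms : List (V × C)}
    (h : ∀ u, floodSeq G ms ω u = d) : floodCost G ω d ≤ ms.length :=
  Nat.sInf_le ⟨ms, rfl, h⟩

variable [Fintype V] [DecidableEq C]

theorem exists_floodSeq_eq_const (ω : V → C) (d : C) :
    ∃ ms : List (V × C), ms.length ≤ #{u | ω u ≠ d} ∧ ∀ u, floodSeq G ms ω u = d := by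
  induction hk : #{u | ω u ≠ d} using Nat.strong_induction_on generalizing ω with
  | _ k ih =>
    by_cases hall : ∀ u, ω u = d
    · exact ⟨[], Nat.zero_le _, hall⟩
    obtain ⟨x, hx⟩ := not_forall.1 hall
    have hsub : #{u | floodMove G ω x d u ≠ d} < k := by
      refine hk ▸ card_lt_card ((ssubset_iff_of_subset ?_).2 ⟨x, by simpa using hx, ?_⟩)
      · refine monotone_filter_right _ fun u _ hu => ?_
        unfold floodMove at hu
        split_ifs at hu
        exacts [absurd rfl hu, hu]
      · simp [floodMove]
    obtain ⟨ms, hlen, hms⟩ := ih _ hsub _ rfl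
    exact ⟨(x, d) :: ms, by simp only [List.length_cons]; omega, hms⟩

theorem floodCost_le_card_ne (ω : V → C) (d : C) : floodCost G ω d ≤ #{u | ω u ≠ d} := by
  obtain ⟨ms, hlen, hms⟩ := exists_floodSeq_eq_const (G := G) ω d
  exact (floodCost_le_length hms).trans hlen

variable [DecidableEq V]

theorem hammingDist_floodMove_add (ω ω₀ : V → C) (v : V) (e : C) :
    hammingDist (floodMove G ω v e) ω₀ + #{u | (monoSubgraph G ω).Reachable v u ∧ ω₀ u = e} =
      hammingDist ω ω₀ + #{u | (monoSubgraph G ω).Reachable v u ∧ ω₀ u = ω v} := by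
  simp only [hammingDist, card_filter, ← sum_add_distrib]
  refine sum_congr rfl fun u _ => ?_
  by_cases h : (monoSubgraph G ω).Reachable v u
  · simp only [floodMove, h, colour_eq_of_monoSubgraph_reachable h, if_true, true_and]
    split_ifs <;> simp_all
  · simp [floodMove, h]

/-- The colour classes of `ω₀` within any monochromatic component differ in size by at most one,
so that, by `hammingDist_floodMove_add`, no move increases the Hamming distance to `ω₀` by more
than one. -/
def IsFloodBalanced (G : SimpleGraph V) (ω₀ : V → C) : Prop :=
  ∀ (ω : V → C) (v : V) (e : C),
    #{u | (monoSubgraph G ω).Reachable v u ∧ ω₀ u = ω v} ≤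
      #{u | (monoSubgraph G ω).Reachable v u ∧ ω₀ u = e} + 1

theorem IsFloodBalanced.hammingDist_floodSeq_le {ω₀ : V → C} (hbal : IsFloodBalanced G ω₀) :
    ∀ (ms : List (V × C)) (ω : V → C),
      hammingDist (floodSeq G ms ω) ω₀ ≤ hammingDist ω ω₀ + ms.length
  | [], ω => by simp [floodSeq]
  | (v, e) :: ms, ω => by
    have hrest := hbal.hammingDist_floodSeq_le ms (floodMove G ω v e)
    have hmove := hammingDist_floodMove_add (G := G) ω ω₀ v e
    have hcomp := hbal ω v e
    simp only [floodSeq, List.length_cons]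
    omega

theorem IsFloodBalanced.card_ne_le_floodCost {ω₀ : V → C} (hbal : IsFloodBalanced G ω₀) (d : C) :
    #{u | ω₀ u ≠ d} ≤ floodCost G ω₀ d := by
  obtain ⟨ms, -, hms⟩ := exists_floodSeq_eq_const (G := G) ω₀ d
  refine le_csInf ⟨_, ms, rfl, hms⟩ ?_
  rintro _ ⟨ms, rfl, hms⟩
  have h := hbal.hammingDist_floodSeq_le ms ω₀
  rw [hammingDist_self, funext hms, hammingDist, zero_add] at h
  simpa only [ne_comm] using h

end Flooding

section FloodCostMin

variable {V C : Type*} {G : SimpleGraph V}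

theorem floodCostMin_le_floodCost (ω : V → C) (d : C) : floodCostMin G ω ≤ floodCost G ω d :=
  Nat.sInf_le ⟨d, rfl⟩

theorem le_floodCostMin [Nonempty C] {ω : V → C} {k : ℕ} (h : ∀ d, k ≤ floodCost G ω d) :
    k ≤ floodCostMin G ω :=
  le_csInf ⟨_, Classical.arbitrary C, rfl⟩ (by rintro _ ⟨d, rfl⟩; exact h d)

theorem floodCostMin_le_card_sub [Fintype V] [Nonempty V] {c : ℕ} (ω : V → Fin c) :
    floodCostMin G ω ≤ Fintype.card V - (Fintype.card V + c - 1) / c := by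
  set N := Fintype.card V
  have hN : 0 < N := Fintype.card_pos
  have hc : 0 < c := (ω (Classical.arbitrary V)).pos
  obtain ⟨d, hd⟩ := Fintype.exists_lt_card_fiber_of_mul_lt_card (n := (N - 1) / c) ω
    (by rw [Fintype.card_fin]; exact (Nat.mul_div_le _ _).trans_lt (by omega))
  have hceil : (N + c - 1) / c = (N - 1) / c + 1 := by
    rw [show N + c - 1 = N - 1 + c by omega, Nat.add_div_right _ hc]
  have hsplit := card_filter_add_card_filter_not (s := univ) (fun u => ω u = d)
  simp only [← ne_eq, card_univ] at hsplit
  calc floodCostMin G ω ≤ #{u | ω u ≠ d} :=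
        (floodCostMin_le_floodCost ω d).trans (floodCost_le_card_ne ω d)
    _ ≤ N - (N + c - 1) / c := by omega

theorem maxFloodCost_eq {c k : ℕ} (hle : ∀ ω : V → Fin c, floodCostMin G ω ≤ k)
    {ω₀ : V → Fin c} (hsurj : Function.Surjective ω₀) (hge : k ≤ floodCostMin G ω₀) :
    maxFloodCost c G = k := by
  refine le_antisymm (csSup_le' ?_) (hge.trans (le_csSup ⟨k, ?_⟩ ⟨ω₀, hsurj, rfl⟩)) <;>
  · rintro _ ⟨ω, -, rfl⟩
    exact hle ω

end FloodCostMin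


theorem Nat.card_filter_Ico_mod_add {a b c x : ℕ} (hab : a ≤ b) (hxc : x < c) :
    #{m ∈ Ico a b | m % c = x} + (a / c + if x < a % c then 1 else 0) =
      b / c + if x < b % c then 1 else 0 := by
  have hcount (k : ℕ) : #{m ∈ range k | m % c = x} = k / c + if x < k % c then 1 else 0 := by
    have h := Nat.count_modEq_card k hxc.pos x
    rw [Nat.count_eq_card_filter_range, Nat.mod_eq_of_lt hxc] at h
    simpa only [Nat.ModEq, Nat.mod_eq_of_lt hxc] using h
  rw [← hcount, ← hcount, card_filter, card_filter, card_filter, add_comm,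
    sum_range_add_sum_Ico _ hab]

theorem Nat.card_filter_Ico_mod_le {a b c x y : ℕ} (hx : x < c) (hy : y < c) :
    #{m ∈ Ico a b | m % c = x} ≤ #{m ∈ Ico a b | m % c = y} + 1 := by
  rcases le_total b a with hba | hab
  · simp [Ico_eq_empty_of_le hba]
  have hxab := Nat.card_filter_Ico_mod_add hab hx
  have hyab := Nat.card_filter_Ico_mod_add hab hy
  split_ifs at hxab hyab <;> omega

section PathGraph

variable {n : ℕ} {C : Type*}

theorem mem_support_of_pathGraph_walk {x y w : Fin n} (p : (pathGraph n).Walk x y)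
    (hxw : x ≤ w) (hwy : w ≤ y) : w ∈ p.support := by
  induction p with
  | nil => simp [le_antisymm hxw hwy]
  | @cons a b _ hadj _ ih =>
    rcases eq_or_ne w a with rfl | hwa
    · simp
    · have hbw : b ≤ w := by
        rw [pathGraph_adj] at hadj
        omega
      simp [ih hbw hwy]

theorem monoSubgraph_pathGraph_reachable_of_le {ω : Fin n → C} {x y w : Fin n}
    (h : (monoSubgraph (pathGraph n) ω).Reachable x y) (hxw : x ≤ w) (hwy : w ≤ y) :
    (monoSubgraph (pathGraph n) ω).Reachable x w := by
  obtain ⟨p⟩ := h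
  have hw := mem_support_of_pathGraph_walk (p.mapLe (monoSubgraph_le ω)) hxw hwy
  rw [Walk.support_mapLe_eq_support] at hw
  exact ⟨p.takeUntil w hw⟩

theorem exists_monoSubgraph_pathGraph_reachable_eq_Icc (ω : Fin n → C) (v : Fin n) :
    ∃ a b : Fin n, ({u | (monoSubgraph (pathGraph n) ω).Reachable v u} : Finset (Fin n)) =
      Icc a b := by
  set K : Finset (Fin n) := {u | (monoSubgraph (pathGraph n) ω).Reachable v u}
  have hK : K.Nonempty := ⟨v, by simp [K]⟩
  have hmin := (mem_filter.1 (K.min'_mem hK)).2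
  have hmax := (mem_filter.1 (K.max'_mem hK)).2
  refine ⟨K.min' hK, K.max' hK, Finset.ext fun w => ⟨fun hw => ?_, fun hw => ?_⟩⟩
  · exact mem_Icc.2 ⟨K.min'_le w hw, K.le_max' w hw⟩
  · obtain ⟨hlo, hhi⟩ := mem_Icc.1 hw
    exact mem_filter.2 ⟨mem_univ w,
      hmin.trans (monoSubgraph_pathGraph_reachable_of_le (hmin.symm.trans hmax) hlo hhi)⟩

end PathGraph

section CyclicColouring

variable {n c : ℕ}

def cyclicColouring (n : ℕ) {c : ℕ} (hc : 0 < c) : Fin n → Fin c :=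
  fun u => ⟨u % c, Nat.mod_lt _ hc⟩

theorem card_filter_cyclicColouring_eq (hc : 0 < c) (s : Finset (Fin n)) (x : Fin c) :
    #{u ∈ s | cyclicColouring n hc u = x} = #{m ∈ s.map Fin.valEmbedding | m % c = x} := by
  rw [filter_map, card_map]
  congr 1
  ext u
  simp [cyclicColouring, Fin.ext_iff]

theorem isFloodBalanced_cyclicColouring (hc : 0 < c) :
    IsFloodBalanced (pathGraph n) (cyclicColouring n hc) := by
  intro ω v e
  obtain ⟨a, b, hK⟩ := exists_monoSubgraph_pathGraph_reachable_eq_Icc ω v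
  have hcount (x : Fin c) :
      #{u | (monoSubgraph (pathGraph n) ω).Reachable v u ∧ cyclicColouring n hc u = x} =
        #{m ∈ Ico (a : ℕ) (b + 1) | m % c = x} := by
    rw [← filter_filter, hK, card_filter_cyclicColouring_eq, Fin.map_valEmbedding_Icc,
      Ico_add_one_right_eq_Icc]
  rw [hcount, hcount]
  exact Nat.card_filter_Ico_mod_le (ω v).isLt e.isLt

theorem card_filter_cyclicColouring_le (hc : 0 < c) (x : Fin c) :
    #{u | cyclicColouring n hc u = x} ≤ (n + c - 1) / c := by
  have h := Nat.card_filter_Ico_mod_add (Nat.zero_le n) x.isLt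
  rw [← range_eq_Ico, ← Nat.Iio_eq_range, ← Fin.map_valEmbedding_univ,
    ← card_filter_cyclicColouring_eq hc] at h
  simp only [Nat.zero_div, Nat.zero_mod, Nat.not_lt_zero, if_false, add_zero] at h
  have hdiv := Nat.div_add_mod' n c
  rw [Nat.le_div_iff_mul_le hc, h, add_mul]
  split_ifs <;> omega

theorem card_sub_le_floodCostMin_cyclicColouring (hc : 0 < c) :
    n - (n + c - 1) / c ≤ floodCostMin (pathGraph n) (cyclicColouring n hc) := by
  have : Nonempty (Fin c) := ⟨⟨0, hc⟩⟩
  refine le_floodCostMin fun d =>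
    le_trans ?_ ((isFloodBalanced_cyclicColouring hc).card_ne_le_floodCost d)
  have hsplit :=
    card_filter_add_card_filter_not (s := univ) (fun u => cyclicColouring n hc u = d)
  simp only [← ne_eq, card_univ, Fintype.card_fin] at hsplit
  have := card_filter_cyclicColouring_le (n := n) hc d
  omega

theorem cyclicColouring_surjective (hc : 0 < c) (hcn : c ≤ n) :
    Function.Surjective (cyclicColouring n hc) :=
  fun x => ⟨⟨x, x.isLt.trans_le hcn⟩, Fin.ext (Nat.mod_eq_of_lt x.isLt)⟩

end CyclicColouring

/-- For the path `P` on `n` vertices, `M_c(P) = n - ⌈n / c⌉`. -/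
theorem maxFloodCost_pathGraph (n c : ℕ) (hc : 1 ≤ c) (hcn : c ≤ n) :
    maxFloodCost c (SimpleGraph.pathGraph n) = n - (n + c - 1) / c := by
  have : Nonempty (Fin n) := ⟨⟨0, by omega⟩⟩
  refine maxFloodCost_eq (fun ω => ?_) (cyclicColouring_surjective hc hcn)
    (card_sub_le_floodCostMin_cyclicColouring hc)
  simpa using floodCostMin_le_card_sub (G := pathGraph n) ω
end

section
/- Let P be a path on n vertices and let ω be an r-shifted C-rainbow colouring of P (for some r ∈ {0,…,n−1}), where |C| = c ≥ 2. Then for any d ∈ C, m(P,ω,d) ≥ n − N_d(P,ω). -/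
open Classical SimpleGraph

/-- `ω` is an `r`-shifted `C`-rainbow colouring of the path `v₁ … vₙ` (here indexed by
`Fin n`, with `v_i` corresponding to index `i - 1`): there is a bijective indexing
`e : ZMod c → C` of the `c` colours (combining the indexing `d` of `C` with the
permutation `π`) such that `ω(v_i) = e((i - r) mod c)` for all `1 ≤ i ≤ n`.
A `C`-rainbow colouring is a `0`-shifted `C`-rainbow colouring. -/
def IsShiftedRainbow {C : Type*} (c r : ℕ) {n : ℕ} (ω : Fin n → C) : Prop :=
  ∃ e : ZMod c → C, Function.Bijective e ∧
    ∀ i : Fin n, ω i = e ((((i : ℕ) + 1 : ℕ) : ZMod c) - ((r : ℕ) : ZMod c))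

/-! Let `T v` be the index of the first move that changes the colour of `v`. The vertices first
recoloured by one move form part of a single monochromatic component at that time, so they had the
same original colour, and every vertex between two of them is recoloured no later. Every vertex
not coloured `d` is recoloured, and we charge it injectively to a move: the leftmost vertex of a
class to the move that recolours the class, any other vertex `v` to the move that first recolours
some vertex of colour `d` lying between `v` and its predecessor `p` in the class but inside no
smaller such gap. Such a vertex exists because the colouring is periodic: the gap `(p, v)` has
length `m c` and contains `m` positions of colour `d`, while the laminar family of gaps nested in
it covers fewer than `m` of them. -/

open Finset

section Flooding

variable {V C : Type*} (G : SimpleGraph V)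

theorem floodSeq_append (l₁ l₂ : List (V × C)) (ω : V → C) :
    floodSeq G (l₁ ++ l₂) ω = floodSeq G l₂ (floodSeq G l₁ ω) := by
  induction l₁ generalizing ω with
  | nil => rfl
  | cons m ms ih => exact ih _

theorem floodSeq_take_add_one (ω : V → C) {ms : List (V × C)} {t : ℕ} (ht : t < ms.length) :
    floodSeq G (ms.take (t + 1)) ω = floodMove G (floodSeq G (ms.take t) ω) ms[t].1 ms[t].2 := by
  rw [List.take_add_one, List.getElem?_eq_getElem ht, Option.toList_some, floodSeq_append]
  rfl

variable {G}

theorem SimpleGraph.Reachable.apply_eq_of_monoSubgraph {κ : V → C} {u w : V}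
    (h : (monoSubgraph G κ).Reachable u w) : κ u = κ w := by
  obtain ⟨p⟩ := h
  induction p with
  | nil => rfl
  | cons hadj _ ih => exact hadj.2.trans ih

theorem reachable_of_floodMove_ne {κ : V → C} {p u : V} {x : C}
    (h : floodMove G κ p x u ≠ κ u) : (monoSubgraph G κ).Reachable p u := by
  by_contra hpu
  exact h (if_neg hpu)

theorem floodMove_ne_of_reachable {κ : V → C} {p u w : V} {x : C}
    (h : floodMove G κ p x u ≠ κ u) (huw : (monoSubgraph G κ).Reachable u w) :
    floodMove G κ p x w ≠ κ w := by
  have hpu := reachable_of_floodMove_ne h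
  rw [floodMove, if_pos hpu] at h
  rwa [floodMove, if_pos (hpu.trans huw), ← huw.apply_eq_of_monoSubgraph]

theorem floodSeq_map_eq {d : C} (l : List V) (ω : V → C) {v : V} (hv : v ∈ l ∨ ω v = d) :
    floodSeq G (l.map (·, d)) ω v = d := by
  induction l generalizing ω with
  | nil => simpa [floodSeq] using hv
  | cons u l ih =>
    apply ih
    rcases hv with hv | hv
    · rcases List.mem_cons.mp hv with rfl | hv
      · exact .inr (if_pos (Reachable.refl _))
      · exact .inl hv
    · exact .inr (by unfold floodMove; split_ifs <;> simp [hv])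

theorem le_floodCost [Fintype V] {ω : V → C} {d : C} {k : ℕ}
    (h : ∀ ms : List (V × C), (∀ v, floodSeq G ms ω v = d) → k ≤ ms.length) :
    k ≤ floodCost G ω d := by
  have hflood : ∀ v, floodSeq G (univ.toList.map (·, d)) ω v = d := fun v =>
    floodSeq_map_eq _ ω (.inl (mem_toList.mpr (mem_univ v)))
  refine le_csInf ⟨_, _, rfl, hflood⟩ ?_
  rintro _ ⟨ms, rfl, hms⟩
  exact h ms hms

variable (G) (ω : V → C) (ms : List (V × C))

noncomputable def firstChange (v : V) : ℕ :=
  sInf {t | t = ms.length ∨ floodSeq G (ms.take (t + 1)) ω v ≠ ω v}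

variable {ω ms}

theorem firstChange_le_length (v : V) : firstChange G ω ms v ≤ ms.length :=
  Nat.sInf_le (.inl rfl)

theorem floodSeq_take_of_le_firstChange {v : V} {t : ℕ} (ht : t ≤ firstChange G ω ms v) :
    floodSeq G (ms.take t) ω v = ω v := by
  cases t with
  | zero => rfl
  | succ t =>
    have := Nat.notMem_of_lt_sInf (Nat.lt_of_succ_le ht)
    simp only [Set.mem_ofPred_eq, not_or, not_not] at this
    exact this.2

theorem firstChange_lt_length {v : V} (hv : floodSeq G ms ω v ≠ ω v) :
    firstChange G ω ms v < ms.length := by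
  refine (firstChange_le_length G v).lt_of_ne fun h => hv ?_
  simpa using floodSeq_take_of_le_firstChange G h.ge

theorem floodMove_ne_of_firstChange_eq {v : V} {t : ℕ} (hv : firstChange G ω ms v = t)
    (ht : t < ms.length) :
    floodMove G (floodSeq G (ms.take t) ω) ms[t].1 ms[t].2 v ≠ floodSeq G (ms.take t) ω v := by
  subst hv
  rw [← floodSeq_take_add_one G ω ht, floodSeq_take_of_le_firstChange G le_rfl]
  exact (Nat.sInf_mem (s := {t | t = ms.length ∨ floodSeq G (ms.take (t + 1)) ω v ≠ ω v})
    ⟨_, .inl rfl⟩).resolve_left ht.ne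

theorem eq_of_firstChange_eq {u v : V} (huv : firstChange G ω ms u = firstChange G ω ms v)
    (hu : firstChange G ω ms u < ms.length) : ω u = ω v := by
  set t := firstChange G ω ms u
  have hpu := reachable_of_floodMove_ne (floodMove_ne_of_firstChange_eq G rfl hu)
  have hpv := reachable_of_floodMove_ne (floodMove_ne_of_firstChange_eq G huv.symm hu)
  calc ω u = floodSeq G (ms.take t) ω u := (floodSeq_take_of_le_firstChange G le_rfl).symm
    _ = floodSeq G (ms.take t) ω v := hpu.apply_eq_of_monoSubgraph.symm.trans hpv.apply_eq_of_monoSubgraph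
    _ = ω v := floodSeq_take_of_le_firstChange G huv.le

end Flooding

section Path

variable {C : Type*} {n : ℕ}

theorem SimpleGraph.Reachable.monoSubgraph_pathGraph_of_le {κ : Fin n → C} {u w v : Fin n}
    (h : (monoSubgraph (pathGraph n) κ).Reachable u v) (huw : u ≤ w) (hwv : w ≤ v) :
    (monoSubgraph (pathGraph n) κ).Reachable u w := by
  obtain ⟨p⟩ := h
  induction p with
  | nil => exact le_antisymm hwv huw ▸ Reachable.refl _
  | @cons a b _ hab _ ih =>
    rcases huw.eq_or_lt with rfl | hlt
    · exact Reachable.refl _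
    · have hbw : b ≤ w := by
        rcases pathGraph_adj.mp hab.1 with h | h <;> omega
      exact hab.reachable.trans (ih hbw hwv)

/-- `T v` plays the role of the index of the first of `L` moves that recolours the vertex `v` of
a path, `T v = L` meaning that no move does. -/
structure IsFloodSchedule (ω : Fin n → C) (T : Fin n → ℕ) (L : ℕ) : Prop where
  eq_of_eq : ∀ ⦃u v⦄, T u = T v → T u < L → ω u = ω v
  le_of_le_of_le : ∀ ⦃u w v⦄, u ≤ w → w ≤ v → T u = T v → T u < L → T w ≤ T u

theorem isFloodSchedule_firstChange (ω : Fin n → C) (ms : List (Fin n × C)) :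
    IsFloodSchedule ω (firstChange (pathGraph n) ω ms) ms.length where
  eq_of_eq _ _ := eq_of_firstChange_eq _
  le_of_le_of_le u w v huw hwv huv hu := by
    set t := firstChange (pathGraph n) ω ms u
    by_contra! htw
    have hu' := floodMove_ne_of_firstChange_eq _ rfl hu
    have hpu := reachable_of_floodMove_ne hu'
    have hpv := reachable_of_floodMove_ne (floodMove_ne_of_firstChange_eq _ huv.symm hu)
    have hw := floodMove_ne_of_reachable hu'
      ((hpu.symm.trans hpv).monoSubgraph_pathGraph_of_le huw hwv)
    rw [← floodSeq_take_add_one _ ω hu, floodSeq_take_of_le_firstChange _ htw,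
      floodSeq_take_of_le_firstChange _ htw.le] at hw
    exact hw rfl

end Path

theorem Nat.count_modEq_mul {c : ℕ} (hc : 0 < c) (ρ m : ℕ) :
    Nat.count (· ≡ ρ [MOD c]) (m * c) = m := by
  induction m with
  | zero => simp
  | succ m ih =>
    have hone : Nat.count (· ≡ ρ [MOD c]) c = 1 := by
      rw [Nat.count_eq_card_filter_range, card_eq_one]
      refine ⟨ρ % c, ?_⟩
      ext z
      simp only [mem_filter, mem_range, mem_singleton]
      constructor
      · rintro ⟨hz, h⟩
        rwa [Nat.ModEq, Nat.mod_eq_of_lt hz] at h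
      · rintro rfl
        exact ⟨Nat.mod_lt _ hc, Nat.mod_mod _ _⟩
    have hshift : (fun k => m * c + k ≡ ρ [MOD c]) = (· ≡ ρ [MOD c]) := by
      ext k
      simp [Nat.ModEq]
    rw [Nat.succ_mul, Nat.count_add, ih, ← hone]
    simp_rw [hshift]

theorem Nat.card_filter_modEq_Ioo_mul {a b c ρ : ℕ} (hab : a ≤ b) (habc : a ≡ b [MOD c])
    (ha : ¬ a ≡ ρ [MOD c]) : #{z ∈ Ioo a b | z ≡ ρ [MOD c]} * c = b - a := by
  obtain ⟨m, hm⟩ := (Nat.modEq_iff_dvd' hab).mp habc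
  rcases c.eq_zero_or_pos with rfl | hc
  · simp_all
  have hIoo : {z ∈ Ioo a b | z ≡ ρ [MOD c]} = {z ∈ Ico a b | z ≡ ρ [MOD c]} := by
    ext z
    simp only [mem_filter, mem_Ioo, mem_Ico]
    refine ⟨fun h => ⟨⟨h.1.1.le, h.1.2⟩, h.2⟩, fun h => ⟨⟨h.1.1.lt_of_ne ?_, h.1.2⟩, h.2⟩⟩
    rintro rfl
    exact ha h.2
  have hperiodic : Function.Periodic (· ≡ ρ [MOD c]) (m * c) := fun z => by
    simp [Nat.ModEq]
  have hb : b = a + m * c := by rw [mul_comm]; omega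
  rw [hIoo, hb, Nat.filter_Ico_card_eq_of_periodic _ _ _ hperiodic, Nat.count_modEq_mul hc]
  omega

section Gaps

variable {C : Type*} {n : ℕ}

structure IsGap (ω : Fin n → C) (d : C) (T : Fin n → ℕ) (L : ℕ) (p v : Fin n) : Prop where
  lt : p < v
  time_eq : T p = T v
  time_lt : T v < L
  ne : ω v ≠ d
  time_ne : ∀ ⦃x⦄, p < x → x < v → T x ≠ T v

def IsUncovered (ω : Fin n → C) (d : C) (T : Fin n → ℕ) (L : ℕ) (p v z : Fin n) : Prop :=
  p < z ∧ z < v ∧ ω z = d ∧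
    ∀ ⦃p' v'⦄, IsGap ω d T L p' v' → p < p' → v' < v → ¬ (p' < z ∧ z < v')

variable {ω : Fin n → C} {d : C} {T : Fin n → ℕ} {L c ρ : ℕ} {p v p' v' x z z' : Fin n}

namespace IsGap

theorem time_lt_of_mem (g : IsGap ω d T L p v) (hT : IsFloodSchedule ω T L) (hpx : p < x)
    (hxv : x < v) : T x < T v := by
  have hx := hT.le_of_le_of_le hpx.le hxv.le g.time_eq (g.time_eq ▸ g.time_lt)
  exact (g.time_eq ▸ hx).lt_of_ne (g.time_ne hpx hxv)

theorem right_le (g : IsGap ω d T L p v) (g' : IsGap ω d T L p' v') (hT : IsFloodSchedule ω T L)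
    (hp : p ≤ p') (hp'v : p' < v) : v' ≤ v := by
  by_contra! hv
  rcases hp.eq_or_lt with rfl | hp
  · exact g'.time_ne hp'v hv (g.time_eq.symm.trans g'.time_eq)
  · have h₁ := g.time_lt_of_mem hT hp hp'v
    have h₂ := g'.time_lt_of_mem hT hp'v hv
    rw [← g'.time_eq] at h₂
    omega

theorem mem_of_time_eq (g : IsGap ω d T L p v) (hT : IsFloodSchedule ω T L) (hpz : p < z)
    (hzv : z < v) (hx : T x = T z) : p < x ∧ x < v := by
  have hz := g.time_lt_of_mem hT hpz hzv
  have hzL := hz.trans g.time_lt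
  constructor
  · by_contra! hxp
    have := hT.le_of_le_of_le hxp hpz.le hx (hx ▸ hzL)
    rw [g.time_eq] at this
    omega
  · by_contra! hvx
    have := hT.le_of_le_of_le hzv.le hvx hx.symm hzL
    omega

theorem card_mul_eq (g : IsGap ω d T L p v) (hT : IsFloodSchedule ω T L)
    (hω : ∀ u w, ω u = ω w → u.val ≡ w.val [MOD c]) (hd : ∀ u, ω u = d ↔ u.val ≡ ρ [MOD c]) :
    #{z ∈ Ioo p.val v.val | z ≡ ρ [MOD c]} * c = v.val - p.val := by
  have hpv := hT.eq_of_eq g.time_eq (g.time_eq ▸ g.time_lt)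
  exact Nat.card_filter_modEq_Ioo_mul g.lt.le (hω _ _ hpv) fun h => g.ne (hpv ▸ (hd p).mpr h)

end IsGap

theorem card_mul_le_of_forall_covered (hT : IsFloodSchedule ω T L)
    (hω : ∀ u w, ω u = ω w → u.val ≡ w.val [MOD c]) (hd : ∀ u, ω u = d ↔ u.val ≡ ρ [MOD c])
    {s : Finset ℕ} {a b : ℕ} (hs : ∀ z ∈ s, z ≡ ρ [MOD c] ∧
      ∃ p v, IsGap ω d T L p v ∧ a ≤ p.val ∧ v.val ≤ b ∧ p.val < z ∧ z < v.val) :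
    #s * c ≤ b - a := by
  -- At most one gap starts at `a`, and every gap starting inside it is nested in it.
  induction hk : b - a using Nat.strong_induction_on generalizing a s with
  | _ k ih =>
  by_cases hstart : ∃ p v, IsGap ω d T L p v ∧ p.val = a ∧ v.val ≤ b
  · obtain ⟨p, v, g, rfl, hvb⟩ := hstart
    have hleft : {z ∈ s | z < v.val} ⊆ {z ∈ Ioo p.val v.val | z ≡ ρ [MOD c]} := by
      intro z hz
      obtain ⟨hzs, hzv⟩ := mem_filter.mp hz
      obtain ⟨hzρ, p', v', -, hp', -, hp'z, -⟩ := hs z hzs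
      exact mem_filter.mpr ⟨mem_Ioo.mpr ⟨by omega, hzv⟩, hzρ⟩
    have hright : #{z ∈ s | ¬ z < v.val} * c ≤ b - v.val := by
      refine ih (b - v.val) (by have := g.lt; omega) (fun z hz => ?_) rfl
      obtain ⟨hzs, hvz⟩ := mem_filter.mp hz
      obtain ⟨hzρ, p', v', g', hp', hv'b, hp'z, hzv'⟩ := hs z hzs
      refine ⟨hzρ, p', v', g', ?_, hv'b, hp'z, hzv'⟩
      by_contra! hp'v
      have := g.right_le g' hT (Fin.le_def.mpr hp') hp'v
      omega
    calc #s * c = #{z ∈ s | z < v.val} * c + #{z ∈ s | ¬ z < v.val} * c := by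
          rw [← add_mul, card_filter_add_card_filter_not]
      _ ≤ (v.val - p.val) + (b - v.val) := add_le_add
          ((Nat.mul_le_mul_right c (card_le_card hleft)).trans (g.card_mul_eq hT hω hd).le) hright
      _ = k := by have := g.lt; omega
  · rcases lt_or_ge a b with hab | hba
    · refine (ih (b - (a + 1)) (by omega) (fun z hz => ?_) rfl).trans (by omega)
      obtain ⟨hzρ, p, v, g, hap, hvb, hpz, hzv⟩ := hs z hz
      refine ⟨hzρ, p, v, g, ?_, hvb, hpz, hzv⟩
      by_contra! hpa
      exact hstart ⟨p, v, g, by omega, hvb⟩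
    · have hs₀ : s = ∅ := eq_empty_of_forall_notMem fun z hz => by
        obtain ⟨-, p, v, -, hap, hvb, hpz, hzv⟩ := hs z hz
        omega
      simp [hs₀]

theorem IsGap.exists_isUncovered (g : IsGap ω d T L p v) (hT : IsFloodSchedule ω T L)
    (hω : ∀ u w, ω u = ω w → u.val ≡ w.val [MOD c]) (hd : ∀ u, ω u = d ↔ u.val ≡ ρ [MOD c]) :
    ∃ z, IsUncovered ω d T L p v z := by
  set D := {z ∈ Ioo p.val v.val | z ≡ ρ [MOD c]}
  set s := {z ∈ D | ∃ p' v', IsGap ω d T L p' v' ∧ p.val + 1 ≤ p'.val ∧ v'.val ≤ v.val - 1 ∧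
    p'.val < z ∧ z < v'.val}
  have hs : #s * c ≤ (v.val - 1) - (p.val + 1) :=
    card_mul_le_of_forall_covered hT hω hd fun z hz =>
      ⟨(mem_filter.mp (mem_filter.mp hz).1).2, (mem_filter.mp hz).2⟩
  have hD : #D * c = v.val - p.val := g.card_mul_eq hT hω hd
  have hsD : #s < #D := by
    by_contra! h
    have := Nat.mul_le_mul_right c h
    have := g.lt
    omega
  obtain ⟨z, hzD, hzs⟩ := exists_mem_notMem_of_card_lt_card hsD
  obtain ⟨hz, hzρ⟩ := mem_filter.mp hzD
  obtain ⟨hpz, hzv⟩ := mem_Ioo.mp hz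
  refine ⟨⟨z, by omega⟩, hpz, hzv, (hd _).mpr hzρ, fun p' v' g' hpp' hv'v hz' => hzs ?_⟩
  exact mem_filter.mpr ⟨hzD, p', v', g', by omega, by omega, hz'.1, hz'.2⟩

theorem exists_isGap (hxv : x < v) (hx : T x = T v) (hvL : T v < L) (hv : ω v ≠ d) :
    ∃ p, IsGap ω d T L p v := by
  obtain ⟨p, hp, hmax⟩ :=
    ({y | y < v ∧ T y = T v} : Finset (Fin n)).exists_max_image id ⟨x, by simp [hxv, hx]⟩
  obtain ⟨hpv, hp⟩ := (mem_filter.mp hp).2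
  refine ⟨p, hpv, hp, hvL, hv, fun y hpy hyv hy => ?_⟩
  exact (hmax y (mem_filter.mpr ⟨mem_univ y, hyv, hy⟩)).not_gt hpy

theorem IsUncovered.eq_of_time_eq (hT : IsFloodSchedule ω T L) (g : IsGap ω d T L p v)
    (hz : IsUncovered ω d T L p v z) (g' : IsGap ω d T L p' v') (hz' : IsUncovered ω d T L p' v' z')
    (hzz' : T z = T z') (hp : p ≤ p') : v = v' := by
  obtain ⟨hp'z, hzv'⟩ := g'.mem_of_time_eq hT hz'.1 hz'.2.1 hzz'
  have hv' : v' ≤ v := g.right_le g' hT hp (hp'z.trans hz.2.1)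
  rcases hp.eq_or_lt with rfl | hp
  · exact le_antisymm (g'.right_le g hT le_rfl (hp'z.trans hzv')) hv'
  · rcases hv'.eq_or_lt with rfl | hv'
    · exact absurd g'.time_eq (g.time_ne hp g'.lt)
    · exact absurd ⟨hp'z, hzv'⟩ (hz.2.2.2 g' hp hv')

/-- The move `t` pays for `v`: either `v` is the leftmost vertex first recoloured by move
`t = T v`, or `t` first recolours an uncovered vertex of colour `d` in the gap ending at `v`. -/
def Charges (ω : Fin n → C) (d : C) (T : Fin n → ℕ) (L : ℕ) (v : Fin n) (t : ℕ) : Prop :=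
  (T v = t ∧ ∀ x < v, T x ≠ T v) ∨
    ∃ p z, IsGap ω d T L p v ∧ IsUncovered ω d T L p v z ∧ T z = t

theorem exists_charges (hT : IsFloodSchedule ω T L)
    (hω : ∀ u w, ω u = ω w → u.val ≡ w.val [MOD c]) (hd : ∀ u, ω u = d ↔ u.val ≡ ρ [MOD c])
    (hv : ω v ≠ d) (hvL : T v < L) : ∃ t < L, Charges ω d T L v t := by
  by_cases hleft : ∃ x < v, T x = T v
  swap
  · exact ⟨T v, hvL, .inl ⟨rfl, fun x hxv hx => hleft ⟨x, hxv, hx⟩⟩⟩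
  obtain ⟨x, hxv, hx⟩ := hleft
  obtain ⟨p, g⟩ := exists_isGap hxv hx hvL hv
  obtain ⟨z, hz⟩ := g.exists_isUncovered hT hω hd
  exact ⟨T z, (g.time_lt_of_mem hT hz.1 hz.2.1).trans hvL, .inr ⟨p, z, g, hz, rfl⟩⟩

theorem IsUncovered.time_ne (hT : IsFloodSchedule ω T L) (g : IsGap ω d T L p' v')
    (hz : IsUncovered ω d T L p' v' z) (hv : ω v ≠ d) : T z ≠ T v := fun hzv =>
  hv (hz.2.2.1 ▸ hT.eq_of_eq hzv ((g.time_lt_of_mem hT hz.1 hz.2.1).trans g.time_lt)).symm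

theorem Charges.eq (hT : IsFloodSchedule ω T L) {t : ℕ} (hv : ω v ≠ d) (hv' : ω v' ≠ d)
    (h : Charges ω d T L v t) (h' : Charges ω d T L v' t) : v = v' := by
  rcases h with ⟨rfl, hleft⟩ | ⟨p, z, g, hz, rfl⟩ <;>
    rcases h' with ⟨htv', hleft'⟩ | ⟨p', z', g', hz', htz'⟩
  · rcases lt_trichotomy v v' with h | h | h
    · exact absurd htv'.symm (hleft' v h)
    · exact h
    · exact absurd htv' (hleft v' h)
  · exact absurd htz' (hz'.time_ne hT g' hv)
  · exact absurd htv'.symm (hz.time_ne hT g hv')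
  · rcases le_total p p' with hp | hp
    · exact hz.eq_of_time_eq hT g g' hz' htz'.symm hp
    · exact (hz'.eq_of_time_eq hT g' g hz htz' hp).symm

theorem card_filter_ne_le_of_isFloodSchedule (hT : IsFloodSchedule ω T L)
    (hω : ∀ u w, ω u = ω w → u.val ≡ w.val [MOD c]) (hd : ∀ u, ω u = d ↔ u.val ≡ ρ [MOD c])
    (hL : ∀ v, ω v ≠ d → T v < L) : #{v | ω v ≠ d} ≤ L := by
  choose! θ hθL hθ using fun v (hv : ω v ≠ d) => exists_charges hT hω hd hv (hL v hv)
  calc #{v | ω v ≠ d} ≤ #(range L) := by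
        refine card_le_card_of_injOn θ (fun v hv => ?_) fun v hv v' hv' h => ?_
        · exact mem_range.mpr (hθL v (mem_filter.mp hv).2)
        · exact (hθ v (mem_filter.mp hv).2).eq hT (mem_filter.mp hv).2 (mem_filter.mp hv').2
            (h ▸ hθ v' (mem_filter.mp hv').2)
    _ = L := card_range L

end Gaps

section Rainbow

variable {C : Type*} {n c r : ℕ} {ω : Fin n → C}

theorem IsShiftedRainbow.modEq_of_eq (h : IsShiftedRainbow c r ω) {u v : Fin n}
    (huv : ω u = ω v) : u.val ≡ v.val [MOD c] := by
  obtain ⟨e, he, hω⟩ := h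
  rw [hω, hω, he.1.eq_iff, sub_left_inj, ZMod.natCast_eq_natCast_iff] at huv
  exact Nat.ModEq.add_right_cancel' 1 huv

theorem IsShiftedRainbow.exists_eq_iff_modEq [NeZero c] (h : IsShiftedRainbow c r ω) (d : C) :
    ∃ ρ, ∀ v, ω v = d ↔ v.val ≡ ρ [MOD c] := by
  obtain ⟨e, he, hω⟩ := h
  obtain ⟨k, rfl⟩ := he.2 d
  refine ⟨(k + r - 1 : ZMod c).val, fun v => ?_⟩
  rw [hω, he.1.eq_iff, ← ZMod.natCast_eq_natCast_iff, ZMod.natCast_zmod_val]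
  push_cast
  constructor <;> intro h <;> linear_combination h

end Rainbow

theorem shiftedRainbow_floodCost_ge_general {C : Type*} (n c r : ℕ) (hc : 2 ≤ c)
    (ω : Fin n → C) (h : IsShiftedRainbow c r ω) (d : C) :
    n - {i : Fin n | ω i = d}.ncard ≤ floodCost (SimpleGraph.pathGraph n) ω d := by
  have : NeZero c := ⟨by omega⟩
  obtain ⟨ρ, hρ⟩ := h.exists_eq_iff_modEq d
  have hcount : n - {i : Fin n | ω i = d}.ncard = #{i | ω i ≠ d} := by
    rw [← Set.ncard_coe_finset, coe_filter]
    simp only [mem_univ, true_and]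
    rw [← Set.compl_ofPred, Set.ncard_compl]
    simp
  rw [hcount]
  refine le_floodCost fun ms hms => ?_
  refine card_filter_ne_le_of_isFloodSchedule (isFloodSchedule_firstChange ω ms)
    (fun _ _ => h.modEq_of_eq) hρ fun v hv => ?_
  exact firstChange_lt_length _ (by rw [hms]; exact Ne.symm hv)

/-- If `ω` is an `r`-shifted `C`-rainbow colouring of the path `P` on `n` vertices, where
`|C| = c ≥ 2` and `r ∈ {0, …, n-1}`, then for any `d ∈ C`,
`m(P, ω, d) ≥ n - N_d(P, ω)`. -/
theorem shiftedRainbow_floodCost_ge {C : Type*} (n c r : ℕ) (hc : 2 ≤ c) (hr : r < n)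
    (ω : Fin n → C) (h : IsShiftedRainbow c r ω) (d : C) :
    n - {i : Fin n | ω i = d}.ncard ≤ floodCost (SimpleGraph.pathGraph n) ω d :=
  shiftedRainbow_floodCost_ge_general n c r hc ω h d
end
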